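/- arXiv:1003.4715 — 4 statements merged into one kernel-verified Lean document; each statement's English description precedes it below -/
import Mathlib

section
/- The two formulae for the spreading speed agree: sup{a ∈ ℝ : κ*(a) < 0} = inf{κ(θ)/θ : θ > 0} (as elements of the extended reals). -/
open MeasureTheory Filter Topology

/-- The log-Laplace transform of the intensity measure `μ`:
`κ(θ) = log ∫ e^{θ z} μ(dz)` for `θ ≥ 0`, and `κ(θ) = ∞` for `θ < 0`. -/
noncomputable def kappa (μ : Measure ℝ) (θ : ℝ) : EReal :=
  if 0 ≤ θ then (∫⁻ z, ENNReal.ofReal (Real.exp (θ * z)) ∂μ).log else ⊤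

/-- The Fenchel dual `κ*(a) = sup_{θ ∈ ℝ} (θ a − κ(θ))`. -/
noncomputable def kappaStar (μ : Measure ℝ) (a : ℝ) : EReal :=
  ⨆ θ : ℝ, ((θ * a : ℝ) : EReal) - kappa μ θ

/-! For real `a` below the infimum pick `b` strictly between; then `θ b ≤ κ(θ)` for `θ > 0`, which
keeps `θ a - κ(θ)` uniformly negative for `θ` away from `0`. Near `θ = 0` the bound comes instead
from a half-line `[r, ∞)` of mass `e^L > 1`, which by Markov's inequality gives
`κ(θ) ≥ θ r + L`. The reverse inequality is immediate from `θ a - κ(θ) ≤ κ*(a)`. -/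

open Set

lemma EReal.coe_le_div_coe_iff {x : EReal} {a θ : ℝ} (hθ : 0 < θ) :
    (a : EReal) ≤ x / θ ↔ ((θ * a : ℝ) : EReal) ≤ x := by
  rw [EReal.le_div_iff_mul_le (by exact_mod_cast hθ) (EReal.coe_ne_top θ), ← EReal.coe_mul,
    mul_comm]

lemma ofReal_exp_mul_mul_measure_Ici_le_lintegral (μ : Measure ℝ) {θ : ℝ} (hθ : 0 ≤ θ) (r : ℝ) :
    ENNReal.ofReal (Real.exp (θ * r)) * μ (Ici r) ≤
      ∫⁻ z, ENNReal.ofReal (Real.exp (θ * z)) ∂μ := by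
  refine le_trans ?_ (mul_meas_ge_le_lintegral (by fun_prop) (ENNReal.ofReal (Real.exp (θ * r))))
  gcongr
  intro z hz
  exact ENNReal.ofReal_le_ofReal (Real.exp_le_exp.2 (mul_le_mul_of_nonneg_left hz hθ))

lemma add_le_kappa_of_ofReal_exp_le_measure_Ici (μ : Measure ℝ) {θ r L : ℝ} (hθ : 0 ≤ θ)
    (hL : ENNReal.ofReal (Real.exp L) ≤ μ (Ici r)) :
    ((θ * r + L : ℝ) : EReal) ≤ kappa μ θ := by
  rw [kappa, if_pos hθ]
  calc ((θ * r + L : ℝ) : EReal) = (ENNReal.ofReal (Real.exp (θ * r + L))).log := by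
        rw [ENNReal.log_ofReal_of_pos (Real.exp_pos _), Real.log_exp]
    _ ≤ _ := by
        refine ENNReal.log_monotone ?_
        rw [Real.exp_add, ENNReal.ofReal_mul (Real.exp_nonneg _)]
        exact (mul_le_mul_right hL _).trans
          (ofReal_exp_mul_mul_measure_Ici_le_lintegral μ hθ r)

lemma exists_ofReal_exp_le_measure_Ici (μ : Measure ℝ) (hμ : 1 < μ univ) :
    ∃ r L : ℝ, 0 < L ∧ ENNReal.ofReal (Real.exp L) ≤ μ (Ici r) := by
  obtain ⟨q, -, hq1, hqμ⟩ := ENNReal.lt_iff_exists_real_btwn.1 hμ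
  have hq1' : 1 < q := by simpa using hq1
  obtain ⟨r, hr⟩ := ((tendsto_measure_Ici_atBot μ).eventually (lt_mem_nhds hqμ)).exists
  exact ⟨r, Real.log q, Real.log_pos hq1', by
    rw [Real.exp_log (one_pos.trans hq1')]; exact hr.le⟩

lemma exists_pos_gap_below_affine_bounds {a b r L : ℝ} (hab : a < b) (hL : 0 < L) :
    ∃ t₀ c : ℝ, 0 < t₀ ∧ 0 < c ∧ (∀ θ, 0 ≤ θ → θ ≤ t₀ → θ * a + c ≤ θ * r + L) ∧
      ∀ θ, t₀ ≤ θ → θ * a + c ≤ θ * b := by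
  set t₀ := L / (2 * (|a - r| + 1))
  have ht₀ : 0 < t₀ := by positivity
  have ht₀_mul : t₀ * (|a - r| + 1) = L / 2 := by
    simp only [t₀]; field_simp
  refine ⟨t₀, min (L / 2) (t₀ * (b - a)), ht₀, lt_min (by positivity) (by nlinarith), ?_, ?_⟩
  · intro θ hθ hθt₀
    have : θ * (a - r) ≤ t₀ * (|a - r| + 1) := by
      nlinarith [le_abs_self (a - r), abs_nonneg (a - r)]
    linarith [min_le_left (L / 2) (t₀ * (b - a))]
  · intro θ hθ
    nlinarith [min_le_right (L / 2) (t₀ * (b - a))]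

lemma kappaStar_le_of_add_le_kappa (μ : Measure ℝ) {a c : ℝ}
    (h : ∀ θ, 0 ≤ θ → ((θ * a + c : ℝ) : EReal) ≤ kappa μ θ) :
    kappaStar μ a ≤ ((-c : ℝ) : EReal) := by
  refine iSup_le fun θ => ?_
  rcases lt_or_ge θ 0 with hθ | hθ
  · simp [kappa, hθ.not_ge]
  · calc ((θ * a : ℝ) : EReal) - kappa μ θ ≤ ((θ * a : ℝ) : EReal) - ((θ * a + c : ℝ) : EReal) :=
          EReal.sub_le_sub le_rfl (h θ hθ)
      _ = ((-c : ℝ) : EReal) := by rw [← EReal.coe_sub]; ring_nf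

lemma le_kappa_div_of_kappaStar_neg (μ : Measure ℝ) {a θ : ℝ} (ha : kappaStar μ a < 0)
    (hθ : 0 < θ) : (a : EReal) ≤ kappa μ θ / θ :=
  (EReal.coe_le_div_coe_iff hθ).2 <| EReal.sub_nonpos.1 <|
    ((le_iSup (fun θ => ((θ * a : ℝ) : EReal) - kappa μ θ) θ).trans ha.le)

lemma kappaStar_neg_of_lt_iInf (μ : Measure ℝ) (hμ : 1 < μ univ) {a : ℝ}
    (ha : (a : EReal) < ⨅ θ ∈ {θ : ℝ | 0 < θ}, kappa μ θ / (θ : EReal)) :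
    kappaStar μ a < 0 := by
  obtain ⟨b, hab, hbI⟩ := EReal.exists_between_coe_real ha
  have hb : ∀ θ, 0 < θ → ((θ * b : ℝ) : EReal) ≤ kappa μ θ := fun θ hθ =>
    (EReal.coe_le_div_coe_iff hθ).1 (hbI.le.trans (iInf₂_le θ hθ))
  obtain ⟨r, L, hL, hrL⟩ := exists_ofReal_exp_le_measure_Ici μ hμ
  obtain ⟨t₀, c, ht₀, hc, hsmall, hlarge⟩ :=
    exists_pos_gap_below_affine_bounds (r := r) (EReal.coe_lt_coe_iff.1 hab) hL
  refine (kappaStar_le_of_add_le_kappa μ fun θ hθ => ?_).trans_lt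
    (by exact_mod_cast neg_neg_of_pos hc)
  rcases le_or_gt θ t₀ with hθt₀ | hθt₀
  · exact (EReal.coe_le_coe_iff.2 (hsmall θ hθ hθt₀)).trans
      (add_le_kappa_of_ofReal_exp_le_measure_Ici μ hθ hrL)
  · exact (EReal.coe_le_coe_iff.2 (hlarge θ hθt₀.le)).trans (hb θ (ht₀.trans hθt₀))

theorem speed_formulae_agree_general (μ : Measure ℝ)
    (hμ : 1 < μ Set.univ) :
    (⨆ a ∈ {a : ℝ | kappaStar μ a < 0}, (a : EReal)) =
      ⨅ θ ∈ {θ : ℝ | 0 < θ}, kappa μ θ / (θ : EReal) := by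
  refine le_antisymm (iSup₂_le fun a ha => le_iInf₂ fun θ hθ =>
    le_kappa_div_of_kappaStar_neg μ ha hθ) ?_
  refine EReal.ge_of_forall_gt_iff_ge.1 fun a ha => ?_
  exact le_iSup₂ (f := fun a (_ : a ∈ {a : ℝ | kappaStar μ a < 0}) => (a : EReal)) a
    (kappaStar_neg_of_lt_iInf μ hμ ha)

/-- The two formulae for the spreading speed agree:
`sup {a : κ*(a) < 0} = inf {κ(θ)/θ : θ > 0}` in the extended reals. -/
theorem speed_formulae_agree (μ : Measure ℝ) [IsFiniteMeasure μ]
    (hμ : 1 < μ Set.univ)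
    (hφ : ∃ φ : ℝ, 0 < φ ∧ kappa μ φ < ⊤) :
    (⨆ a ∈ {a : ℝ | kappaStar μ a < 0}, (a : EReal)) =
      ⨅ θ ∈ {θ : ℝ | 0 < θ}, kappa μ θ / (θ : EReal) :=
  speed_formulae_agree_general μ hμ
end

section
/- Anomalous spreading speed in the two-type branching Brownian motion example: for every real λ > 1, inf{ max{ (φ²/(2λ) + λ)/φ , (θ²/2 + 1)/θ } : 0 < φ ≤ θ } = (1+λ)/√(2λ). Moreover (1+λ)/√(2λ) > √2, where √2 is the common value of inf_{θ>0}(θ²/(2λ) + λ)/θ and inf_{θ>0}(θ²/2 + 1)/θ, and (1+λ)/√(2λ) → ∞ as λ → ∞. -/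
/-!
With `κ(θ)/θ = θ/(2a) + b/θ`, the ratio decreases on `(0, √(2ab)]` and increases afterwards.
For `λ > 1` the ratios of `ν` and `η` cross at `√(2λ)`, which lies between the minimiser `√2` of
the `η`-ratio and the minimiser `λ√2` of the `ν`-ratio. Hence for `φ ≤ θ` either `θ ≥ √(2λ)`, and
the `η`-ratio at `θ` is at least the crossing value, or `φ ≤ θ < √(2λ)`, and the `ν`-ratio at `φ`
is. The crossing value `(1+λ)/√(2λ)` exceeds `√2` by AM-GM, `2√λ < 1 + λ`.
-/

open Filter Set

/-- `κ(θ)/θ` for `κ(θ) = θ²/(2a) + b`, the log-Laplace transform of a branching Brownian motion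
with variance `1/a` and splitting rate `b`. -/
noncomputable def speedRatio (a b θ : ℝ) : ℝ := (θ ^ 2 / (2 * a) + b) / θ

section MinMax

variable {f g : ℝ → ℝ} {m : ℝ}

theorem isLeast_of_antitoneOn_of_monotoneOn (hm : 0 < m) (hanti : AntitoneOn f (Ioc 0 m))
    (hmono : MonotoneOn f (Ici m)) : IsLeast {x | ∃ θ, 0 < θ ∧ x = f θ} (f m) := by
  refine ⟨⟨m, hm, rfl⟩, ?_⟩
  rintro x ⟨θ, hθ, rfl⟩
  rcases le_total θ m with h | h
  · exact hanti ⟨hθ, h⟩ ⟨hm, le_rfl⟩ h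
  · exact hmono self_mem_Ici h h

theorem isLeast_max_of_antitoneOn_of_monotoneOn (hm : 0 < m) (hf : AntitoneOn f (Ioc 0 m))
    (hg : MonotoneOn g (Ici m)) (hfg : f m = g m) :
    IsLeast {x | ∃ φ θ, 0 < φ ∧ φ ≤ θ ∧ x = max (f φ) (g θ)} (g m) := by
  refine ⟨⟨m, m, hm, le_rfl, by rw [hfg, max_self]⟩, ?_⟩
  rintro x ⟨φ, θ, hφ, hφθ, rfl⟩
  rcases le_total θ m with h | h
  · exact le_max_of_le_left (hfg ▸ hf ⟨hφ, hφθ.trans h⟩ ⟨hm, le_rfl⟩ (hφθ.trans h))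
  · exact le_max_of_le_right (hg self_mem_Ici h h)

end MinMax

section SpeedRatio

variable {a b m : ℝ}

theorem speedRatio_sub_speedRatio (ha : a ≠ 0) {θ θ' : ℝ} (hθ : θ ≠ 0) (hθ' : θ' ≠ 0) :
    speedRatio a b θ - speedRatio a b θ' = (θ - θ') * (θ * θ' - 2 * a * b) / (2 * a * θ * θ') := by
  unfold speedRatio
  field_simp
  ring

theorem speedRatio_antitoneOn (ha : 0 < a) (hm : m ^ 2 ≤ 2 * a * b) :
    AntitoneOn (speedRatio a b) (Ioc 0 m) := by
  rintro θ ⟨hθ, hθm⟩ θ' ⟨hθ', hθ'm⟩ hle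
  have hprod : θ' * θ ≤ 2 * a * b := by nlinarith
  rw [← sub_nonpos, speedRatio_sub_speedRatio ha.ne' hθ'.ne' hθ.ne']
  exact div_nonpos_of_nonpos_of_nonneg
    (mul_nonpos_of_nonneg_of_nonpos (by linarith) (by linarith)) (by positivity)

theorem speedRatio_monotoneOn (ha : 0 < a) (hm₀ : 0 < m) (hm : 2 * a * b ≤ m ^ 2) :
    MonotoneOn (speedRatio a b) (Ici m) := by
  rintro θ (hθm : m ≤ θ) θ' (hθ'm : m ≤ θ') hle
  have hθ : 0 < θ := hm₀.trans_le hθm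
  have hθ' : 0 < θ' := hm₀.trans_le hθ'm
  have hprod : 2 * a * b ≤ θ' * θ := by nlinarith
  rw [← sub_nonneg, speedRatio_sub_speedRatio ha.ne' hθ'.ne' hθ.ne']
  exact div_nonneg (mul_nonneg (by linarith) (by linarith)) (by positivity)

theorem speedRatio_of_sq_eq (ha : a ≠ 0) (hm₀ : m ≠ 0) (hm : m ^ 2 = 2 * a * b) :
    speedRatio a b m = m / a := by
  unfold speedRatio
  field_simp
  linear_combination -hm

theorem isLeast_speedRatio (ha : 0 < a) (hm₀ : 0 < m) (hm : m ^ 2 = 2 * a * b) :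
    IsLeast {x | ∃ θ, 0 < θ ∧ x = speedRatio a b θ} (m / a) :=
  speedRatio_of_sq_eq ha.ne' hm₀.ne' hm ▸ isLeast_of_antitoneOn_of_monotoneOn hm₀
    (speedRatio_antitoneOn ha hm.le) (speedRatio_monotoneOn ha hm₀ hm.ge)

end SpeedRatio

theorem sqrt_two_lt_one_add_div_sqrt_two_mul {x : ℝ} (hx : 1 < x) : √2 < (1 + x) / √(2 * x) := by
  have hx₀ : 0 ≤ x := zero_le_one.trans hx.le
  have h1 : 1 < √x := Real.lt_sqrt_of_sq_lt (by linarith)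
  rw [lt_div_iff₀ (Real.sqrt_pos.2 (by positivity)), Real.sqrt_mul zero_le_two, ← mul_assoc,
    Real.mul_self_sqrt zero_le_two]
  nlinarith [Real.sq_sqrt hx₀]

theorem tendsto_one_add_div_sqrt_two_mul_atTop :
    Tendsto (fun l : ℝ => (1 + l) / √(2 * l)) atTop atTop := by
  have hsqrt : Tendsto (fun l : ℝ => √(2 * l) / 2) atTop atTop :=
    (Real.tendsto_sqrt_atTop.comp (tendsto_id.const_mul_atTop two_pos)).atTop_div_const two_pos
  refine tendsto_atTop_mono' _ ?_ hsqrt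
  filter_upwards [eventually_gt_atTop 0] with l hl
  have hs : 0 < √(2 * l) := Real.sqrt_pos.2 (by positivity)
  rw [div_le_div_iff₀ two_pos hs, ← sq, Real.sq_sqrt (by positivity)]
  linarith

/-- Anomalous spreading speed in the two-type branching Brownian motion
example: for `λ > 1`,
`inf {max ((φ²/(2λ)+λ)/φ) ((θ²/2+1)/θ) : 0 < φ ≤ θ} = (1+λ)/√(2λ)`, which
exceeds `√2`, the common value of the one-type speeds, and tends to `∞` as
`λ → ∞`. -/
theorem anomalous_speed_example (lam : ℝ) (hlam : 1 < lam) :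
    sInf {x : ℝ | ∃ φ θ : ℝ, 0 < φ ∧ φ ≤ θ ∧
        x = max ((φ ^ 2 / (2 * lam) + lam) / φ) ((θ ^ 2 / 2 + 1) / θ)} =
      (1 + lam) / Real.sqrt (2 * lam) ∧
    Real.sqrt 2 < (1 + lam) / Real.sqrt (2 * lam) ∧
    sInf {x : ℝ | ∃ θ : ℝ, 0 < θ ∧ x = (θ ^ 2 / (2 * lam) + lam) / θ} = Real.sqrt 2 ∧
    sInf {x : ℝ | ∃ θ : ℝ, 0 < θ ∧ x = (θ ^ 2 / 2 + 1) / θ} = Real.sqrt 2 ∧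
    Tendsto (fun l : ℝ => (1 + l) / Real.sqrt (2 * l)) atTop atTop := by
  have hlam₀ : 0 < lam := one_pos.trans hlam
  have hunit : speedRatio 1 1 = fun θ => (θ ^ 2 / 2 + 1) / θ := by
    funext θ; simp [speedRatio]
  set s := √(2 * lam)
  have hs₀ : 0 < s := Real.sqrt_pos.2 (by positivity)
  have hs : s ^ 2 = 2 * lam := Real.sq_sqrt (by positivity)
  have hcross : speedRatio 1 1 s = (1 + lam) / s := by
    unfold speedRatio; rw [hs]; field_simp; ring
  have hcross' : speedRatio lam lam s = speedRatio 1 1 s := by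
    rw [hcross]; unfold speedRatio; rw [hs]; field_simp
  have hr2 : √2 ^ 2 = 2 := Real.sq_sqrt zero_le_two
  refine ⟨?_, sqrt_two_lt_one_add_div_sqrt_two_mul hlam, ?_, ?_,
    tendsto_one_add_div_sqrt_two_mul_atTop⟩
  · have key := (isLeast_max_of_antitoneOn_of_monotoneOn hs₀
      (speedRatio_antitoneOn hlam₀ (by nlinarith)) (speedRatio_monotoneOn one_pos hs₀ (by linarith))
      hcross').csInf_eq
    rw [hcross, hunit] at key
    exact key
  · have := isLeast_speedRatio hlam₀ (by positivity : 0 < √2 * lam) (by rw [mul_pow, hr2]; ring)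
    rw [mul_div_cancel_right₀ _ hlam₀.ne'] at this
    exact this.csInf_eq
  · have := isLeast_speedRatio (b := 1) one_pos (Real.sqrt_pos.2 two_pos) (by rw [hr2]; ring)
    rw [div_one, hunit] at this
    exact this.csInf_eq
end

section
/- The two formulae for the anomalous spreading speed agree: with c = cv(κ*_ν°, κ*_η) the greatest closed convex minorant of the swept dual κ*_ν° and κ*_η, and r = c° its swept version, one has sup{a ∈ ℝ : r(a) < 0} = inf{ max{ κ_ν(φ)/φ , κ_η(θ)/θ } : 0 < φ ≤ θ } (as elements of the extended reals). -/
open MeasureTheory Filter Topology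

/-- The swept version `f°` of a function: positive values are swept to `∞`. -/
noncomputable def sweep (f : ℝ → EReal) (a : ℝ) : EReal :=
  if f a ≤ 0 then f a else ⊤

/-- `cv(f,g)`: the greatest closed convex function below both `f` and `g`,
given pointwise as the supremum of the affine minorants of `min f g`. -/
noncomputable def cvMinorant (f g : ℝ → EReal) (a : ℝ) : EReal :=
  ⨆ (p : ℝ) (q : ℝ) (_ : ∀ x : ℝ, ((p * x + q : ℝ) : EReal) ≤ min (f x) (g x)),
    ((p * a + q : ℝ) : EReal)

/-!
For `0 < φ ≤ θ` with `M = max (κ_ν(φ)/φ) (κ_η(θ)/θ)` finite, the line `θ (x - M)` lies below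
`κ*_η`, and below `κ*_ν` on `{κ*_ν ≤ 0} ⊆ (-∞, M]`; so `cv(κ*_ν°, κ*_η)(a) ≥ θ (a - M) > 0` for
`a > M`. Conversely, let `b < b'` lie below the infimum. Since `μ_ν(ℝ) > 1`, `κ*_ν(a₀) < 0` for some
`a₀ < b`, so every affine minorant `p x + q` of `min(κ*_ν°, κ*_η)` is uniformly negative at `a₀`.
It is also `≤ 0` at `b'`: otherwise `p > 0`, Fenchel–Moreau for the lower semicontinuous convex
`κ_η` gives `κ_η(p) ≤ -q < p b'`, and a supporting line of `κ_ν` produces `φ ≤ p` with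
`κ_ν(φ) ≤ φ b'`, contradicting the choice of `b'`. Interpolating, the minorants are uniformly
negative at `b`.
-/

open Set

section Kappa

variable {μ : Measure ℝ} {s t p r : ℝ}

lemma measurable_ofReal_exp_mul (t : ℝ) :
    Measurable fun z : ℝ => ENNReal.ofReal (Real.exp (t * z)) := by
  fun_prop

lemma kappa_of_nonneg (ht : 0 ≤ t) :
    kappa μ t = (∫⁻ z, ENNReal.ofReal (Real.exp (t * z)) ∂μ).log :=
  if_pos ht

lemma kappa_of_neg (ht : t < 0) : kappa μ t = ⊤ :=
  if_neg ht.not_ge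

lemma nonneg_of_kappa_ne_top (h : kappa μ t ≠ ⊤) : 0 ≤ t :=
  not_lt.1 fun ht => h (kappa_of_neg ht)

lemma kappa_zero : kappa μ 0 = (μ univ).log := by
  simp [kappa]

lemma kappa_ne_bot (hμ : μ ≠ 0) (t : ℝ) : kappa μ t ≠ ⊥ := by
  rcases lt_or_ge t 0 with ht | ht
  · simp [kappa_of_neg ht]
  have hsupp : Function.support (fun z : ℝ => ENNReal.ofReal (Real.exp (t * z))) = univ :=
    eq_univ_of_forall fun z => (ENNReal.ofReal_pos.2 (Real.exp_pos _)).ne'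
  rw [kappa_of_nonneg ht, Ne, ENNReal.log_eq_bot_iff, ← Ne, ← pos_iff_ne_zero,
    lintegral_pos_iff_support (measurable_ofReal_exp_mul t), hsupp]
  exact Measure.measure_univ_pos.2 hμ

lemma exists_kappa_eq_coe (hμ : μ ≠ 0) (h : kappa μ t ≠ ⊤) : ∃ k : ℝ, kappa μ t = k :=
  ⟨(kappa μ t).toReal, (EReal.coe_toReal h (kappa_ne_bot hμ t)).symm⟩

lemma kappa_zero_ne_top [IsFiniteMeasure μ] : kappa μ 0 ≠ ⊤ := by
  simp [kappa_zero, measure_ne_top]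

lemma coe_mul_add_log_measure_Ici_le_kappa (c : ℝ) (ht : 0 ≤ t) :
    ((t * c : ℝ) : EReal) + (μ (Ici c)).log ≤ kappa μ t := by
  have hmarkov : ENNReal.ofReal (Real.exp (t * c)) * μ (Ici c) ≤
      ∫⁻ z, ENNReal.ofReal (Real.exp (t * z)) ∂μ := by
    refine le_trans ?_ (mul_meas_ge_le_lintegral₀ (measurable_ofReal_exp_mul t).aemeasurable
      (ENNReal.ofReal (Real.exp (t * c))))
    gcongr
    intro z (hz : c ≤ z)
    exact ENNReal.ofReal_le_ofReal (Real.exp_le_exp.2 (mul_le_mul_of_nonneg_left hz ht))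
  rw [kappa_of_nonneg ht]
  simpa [ENNReal.log_mul_add, ENNReal.log_ofReal_of_pos (Real.exp_pos _)] using
    ENNReal.log_monotone hmarkov

lemma exists_forall_coe_mul_add_le_kappa {C : ℝ} (hC : (C : EReal) < (μ univ).log) :
    ∃ c : ℝ, ∀ t, 0 ≤ t → ((t * c + C : ℝ) : EReal) ≤ kappa μ t := by
  have hlog : ∀ x : ℝ, (ENNReal.ofReal (Real.exp x)).log = x := fun x => by
    rw [ENNReal.log_ofReal_of_pos (Real.exp_pos x), Real.log_exp]
  have hlt : ENNReal.ofReal (Real.exp C) < μ univ := by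
    rwa [← ENNReal.log_lt_log_iff, hlog]
  obtain ⟨c, hc⟩ := ((tendsto_measure_Ici_atBot μ).eventually (lt_mem_nhds hlt)).exists
  refine ⟨c, fun t ht => le_trans ?_ (coe_mul_add_log_measure_Ici_le_kappa c ht)⟩
  rw [EReal.coe_add, ← hlog C]
  gcongr

lemma kappa_convex_comb_le (hs : 0 ≤ s) (ht : 0 ≤ t) {l : ℝ} (hl₀ : 0 ≤ l) (hl₁ : l ≤ 1) :
    kappa μ (l * s + (1 - l) * t) ≤ l * kappa μ s + ((1 - l : ℝ) : EReal) * kappa μ t := by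
  have hexp : ∀ z : ℝ, ENNReal.ofReal (Real.exp (s * z)) ^ l *
      ENNReal.ofReal (Real.exp (t * z)) ^ (1 - l) =
      ENNReal.ofReal (Real.exp ((l * s + (1 - l) * t) * z)) := fun z => by
    rw [ENNReal.ofReal_rpow_of_pos (Real.exp_pos _), ENNReal.ofReal_rpow_of_pos (Real.exp_pos _),
      ← Real.exp_mul, ← Real.exp_mul, ← ENNReal.ofReal_mul (Real.exp_pos _).le, ← Real.exp_add]
    ring_nf
  have hholder := ENNReal.lintegral_mul_norm_pow_le (μ := μ)
    (measurable_ofReal_exp_mul s).aemeasurable (measurable_ofReal_exp_mul t).aemeasurable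
    hl₀ (sub_nonneg.2 hl₁) (add_sub_cancel l 1)
  rw [lintegral_congr hexp] at hholder
  rw [kappa_of_nonneg (by positivity), kappa_of_nonneg hs, kappa_of_nonneg ht]
  simpa [ENNReal.log_mul_add, ENNReal.log_rpow] using ENNReal.log_monotone hholder

lemma slope_le_slope_of_lt_kappa (hs : 0 ≤ s) (hsp : s < p) (hpt : p < t) {ks kt : ℝ}
    (hks : kappa μ s = ks) (hkt : kappa μ t = kt) (hr : (r : EReal) < kappa μ p) :
    (r - ks) / (p - s) ≤ (kt - r) / (t - p) := by
  have hts : 0 < t - s := by linarith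
  obtain ⟨l, hl₀, hl₁, hlts⟩ : ∃ l : ℝ, 0 ≤ l ∧ l ≤ 1 ∧ l * (t - s) = t - p :=
    ⟨(t - p) / (t - s), div_nonneg (by linarith) hts.le, (div_le_one hts).2 (by linarith),
      div_mul_cancel₀ _ hts.ne'⟩
  have hp : p = l * s + (1 - l) * t := by linear_combination hlts
  have hconv := kappa_convex_comb_le (μ := μ) hs (hs.trans (hsp.trans hpt).le) hl₀ hl₁
  rw [← hp, hks, hkt] at hconv
  have hr' : r < l * ks + (1 - l) * kt := by exact_mod_cast hr.trans_le hconv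
  rw [div_le_div_iff₀ (by linarith) (by linarith)]
  linear_combination (t - s) * hr'.le + (ks - kt) * hlts

lemma lowerSemicontinuous_lintegral_exp_mul :
    LowerSemicontinuous fun t : ℝ => ∫⁻ z, ENNReal.ofReal (Real.exp (t * z)) ∂μ := by
  refine lowerSemicontinuous_iff_le_liminf.2 fun t => ?_
  calc ∫⁻ z, ENNReal.ofReal (Real.exp (t * z)) ∂μ
      = ∫⁻ z, liminf (fun s => ENNReal.ofReal (Real.exp (s * z))) (𝓝 t) ∂μ :=
        lintegral_congr fun z => (((ENNReal.continuous_ofReal.comp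
          (Real.continuous_exp.comp (continuous_id.mul continuous_const))).tendsto t).liminf_eq).symm
    _ ≤ _ := lintegral_liminf_le measurable_ofReal_exp_mul

lemma lowerSemicontinuous_kappa : LowerSemicontinuous (kappa μ) := by
  intro t y hy
  rcases lt_or_ge t 0 with ht | ht
  · rw [kappa_of_neg ht] at hy
    filter_upwards [Iio_mem_nhds ht] with s hs
    rwa [kappa_of_neg hs]
  · rw [kappa_of_nonneg ht] at hy
    filter_upwards [(ENNReal.continuous_log.comp_lowerSemicontinuous
      lowerSemicontinuous_lintegral_exp_mul ENNReal.log_monotone) t y hy] with s hs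
    rcases lt_or_ge s 0 with hs0 | hs0
    · exact (kappa_of_neg hs0).symm ▸ hs.trans_le le_top
    · rwa [kappa_of_nonneg hs0]

end Kappa

section KappaStar

variable {μ : Measure ℝ} {p r : ℝ}

lemma coe_sub_le_kappaStar {t k : ℝ} (h : kappa μ t ≤ k) (x : ℝ) :
    ((t * x - k : ℝ) : EReal) ≤ kappaStar μ x :=
  le_iSup_of_le t (by rw [EReal.coe_sub]; exact EReal.sub_le_sub le_rfl h)

lemma kappaStar_le_of_forall_le_kappa {x c : ℝ}
    (h : ∀ t, 0 ≤ t → ((t * x - c : ℝ) : EReal) ≤ kappa μ t) : kappaStar μ x ≤ c := by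
  refine iSup_le fun t => ?_
  rcases lt_or_ge t 0 with ht | ht
  · simp [kappa_of_neg ht]
  calc ((t * x : ℝ) : EReal) - kappa μ t ≤ ((t * x : ℝ) : EReal) - ((t * x - c : ℝ) : EReal) :=
        EReal.sub_le_sub le_rfl (h t ht)
    _ = c := by rw [← EReal.coe_sub]; ring_nf

/-- `κ*(x) ≤ p x - r` says that the line of slope `x` through `(p, r)` lies below `κ`; by convexity
its slope can be squeezed between the left and the right difference quotients at `p`. -/
lemma exists_kappaStar_le_of_lt_kappa [IsFiniteMeasure μ] (hμ : μ ≠ 0) (hp : 0 < p)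
    (hr : (r : EReal) < kappa μ p) {m : ℝ}
    (hm : ∀ t k : ℝ, t < p → kappa μ t = k → r - k ≤ m * (p - t)) :
    ∃ x ≤ m, kappaStar μ x ≤ ((p * x - r : ℝ) : EReal) := by
  obtain ⟨k₀, hk₀⟩ := exists_kappa_eq_coe hμ (kappa_zero_ne_top (μ := μ))
  set R := {y : ℝ | ∃ t k : ℝ, p < t ∧ kappa μ t = k ∧ y = (k - r) / (t - p)}
  have hslope : ∀ y ∈ R, ∀ s k : ℝ, s < p → kappa μ s = k → (r - k) / (p - s) ≤ y := by
    rintro _ ⟨t, kt, hpt, hkt, rfl⟩ s k hsp hks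
    exact slope_le_slope_of_lt_kappa (nonneg_of_kappa_ne_top (hks ▸ EReal.coe_ne_top k))
      hsp hpt hks hkt hr
  have hbdd : BddBelow (insert m R) := by
    refine ⟨(r - k₀) / p, ?_⟩
    rintro y (rfl | hy)
    · rw [div_le_iff₀ hp]
      simpa using hm 0 k₀ hp hk₀
    · simpa using hslope y hy 0 k₀ hp hk₀
  set x := sInf (insert m R)
  refine ⟨x, csInf_le hbdd (mem_insert _ _), kappaStar_le_of_forall_le_kappa fun t _ => ?_⟩
  by_cases htop : kappa μ t = ⊤
  · simp [htop]
  obtain ⟨k, hk⟩ := exists_kappa_eq_coe hμ htop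
  rw [hk, EReal.coe_le_coe_iff]
  rcases lt_trichotomy t p with htp | rfl | hpt
  · have hx : (r - k) / (p - t) ≤ x := le_csInf (insert_nonempty _ _) <| by
      rintro y (rfl | hy)
      · rw [div_le_iff₀ (sub_pos.2 htp)]
        exact hm t k htp hk
      · exact hslope y hy t k htp hk
    rw [div_le_iff₀ (sub_pos.2 htp)] at hx
    linarith
  · have : r < k := by exact_mod_cast hk ▸ hr
    linarith
  · have hx : x ≤ (k - r) / (t - p) :=
      csInf_le hbdd (mem_insert_of_mem _ ⟨t, k, hpt, hk, rfl⟩)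
    rw [le_div_iff₀ (sub_pos.2 hpt)] at hx
    linarith

lemma exists_left_slope_bound_of_lt_kappa (hμ : μ ≠ 0) (hr : (r : EReal) < kappa μ p) :
    ∃ m : ℝ, ∀ t k : ℝ, t < p → kappa μ t = k → r - k ≤ m * (p - t) := by
  obtain ⟨δ, hδ, hnear⟩ := Metric.eventually_nhds_iff.1 (lowerSemicontinuous_kappa p r hr)
  have hlog : ⊥ < (μ univ).log := by simpa [bot_lt_iff_ne_bot] using hμ
  obtain ⟨C, -, hC⟩ := EReal.exists_between_coe_real hlog
  obtain ⟨c, hc⟩ := exists_forall_coe_mul_add_le_kappa hC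
  refine ⟨|r - p * c - C| / δ + |c|, fun t k htp hk => ?_⟩
  have hpt : 0 < p - t := sub_pos.2 htp
  rcases lt_or_ge (p - t) δ with hclose | hfar
  · have hrk : r < k := by
      have : (r : EReal) < kappa μ t :=
        hnear (by rwa [Real.dist_eq, abs_sub_comm, abs_of_pos hpt])
      rwa [hk, EReal.coe_lt_coe_iff] at this
    have : 0 ≤ (|r - p * c - C| / δ + |c|) * (p - t) := by positivity
    linarith
  · have hk' : t * c + C ≤ k := by
      exact_mod_cast hk ▸ hc t (nonneg_of_kappa_ne_top (hk ▸ EReal.coe_ne_top k))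
    have h₁ : |r - p * c - C| ≤ |r - p * c - C| / δ * (p - t) := by
      rw [div_mul_eq_mul_div, le_div_iff₀ hδ]
      exact mul_le_mul_of_nonneg_left hfar (abs_nonneg _)
    have h₂ : c * (p - t) ≤ |c| * (p - t) := mul_le_mul_of_nonneg_right (le_abs_self c) hpt.le
    linarith [le_abs_self (r - p * c - C)]

lemma kappa_le_of_affine_le_kappaStar [IsFiniteMeasure μ] (hμ : μ ≠ 0) {q : ℝ} (hp : 0 < p)
    (h : ∀ x : ℝ, ((p * x + q : ℝ) : EReal) ≤ kappaStar μ x) : kappa μ p ≤ ((-q : ℝ) : EReal) := by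
  by_contra! hlt
  obtain ⟨r, hqr, hr⟩ := EReal.exists_between_coe_real hlt
  obtain ⟨m, hm⟩ := exists_left_slope_bound_of_lt_kappa hμ hr
  obtain ⟨x, -, hx⟩ := exists_kappaStar_le_of_lt_kappa hμ hp hr hm
  have hline : p * x + q ≤ p * x - r := by exact_mod_cast (h x).trans hx
  have : -q < r := by exact_mod_cast hqr
  linarith

/-- If `κ(φ) > φ b` held on `(0, p]`, hence on `[0, p]` as `μ(ℝ) > 1`, the line through `(p, p b)`
below `κ` would have slope `x ≤ b`; then `κ*(x) ≤ p (x - b) ≤ 0`, so `p x + q ≤ p (x - b)`. -/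
lemma exists_kappa_le_mul_of_affine_le_kappaStar [IsFiniteMeasure μ] (hμ : 1 < μ univ)
    {q b : ℝ} (hp : 0 < p)
    (hline : ∀ x, kappaStar μ x ≤ 0 → ((p * x + q : ℝ) : EReal) ≤ kappaStar μ x)
    (hb : 0 < p * b + q) :
    ∃ φ, 0 < φ ∧ φ ≤ p ∧ kappa μ φ ≤ ((φ * b : ℝ) : EReal) := by
  by_contra! hlt
  have hm : ∀ t k : ℝ, t < p → kappa μ t = k → p * b - k ≤ b * (p - t) := by
    intro t k htp hk
    have htk : t * b < k := by
      rcases (nonneg_of_kappa_ne_top (hk ▸ EReal.coe_ne_top k)).eq_or_lt with rfl | ht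
      · have := ENNReal.zero_lt_log_iff.2 hμ
        rw [← kappa_zero, hk] at this
        simpa using this
      · exact_mod_cast hk ▸ hlt t ht htp.le
    linarith
  obtain ⟨x, hxb, hx⟩ := exists_kappaStar_le_of_lt_kappa
    (Measure.measure_univ_pos.1 (zero_lt_one.trans hμ)) hp (hlt p hp le_rfl) hm
  have hx₀ : kappaStar μ x ≤ 0 :=
    hx.trans (by exact_mod_cast (by nlinarith : p * x - p * b ≤ 0))
  have : p * x + q ≤ p * x - p * b := by exact_mod_cast (hline x hx₀).trans hx
  linarith

lemma exists_kappaStar_neg (hμ : 1 < μ univ) (b : ℝ) : ∃ a < b, kappaStar μ a < 0 := by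
  obtain ⟨C, hC₀, hC⟩ := EReal.exists_between_coe_real (ENNReal.zero_lt_log_iff.2 hμ)
  obtain ⟨c, hc⟩ := exists_forall_coe_mul_add_le_kappa hC
  refine ⟨min c (b - 1), by linarith [min_le_right c (b - 1)], ?_⟩
  refine (kappaStar_le_of_forall_le_kappa (c := -C) fun t ht => (le_trans ?_ (hc t ht))).trans_lt
    (by exact_mod_cast neg_neg_of_pos (by exact_mod_cast hC₀))
  exact_mod_cast by nlinarith [mul_le_mul_of_nonneg_left (min_le_left c (b - 1)) ht]

end KappaStar

section Sweep

variable {f g : ℝ → EReal} {a : ℝ}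

lemma sweep_of_nonpos (h : f a ≤ 0) : sweep f a = f a :=
  if_pos h

lemma sweep_lt_zero_iff : sweep f a < 0 ↔ f a < 0 := by
  unfold sweep
  split_ifs with h
  · rfl
  · exact ⟨fun h' => absurd h' not_top_lt, fun h' => absurd h'.le h⟩

lemma coe_le_cvMinorant {p q : ℝ} (h : ∀ x, ((p * x + q : ℝ) : EReal) ≤ min (f x) (g x)) (a : ℝ) :
    ((p * a + q : ℝ) : EReal) ≤ cvMinorant f g a :=
  le_iSup₂_of_le p q (le_iSup_of_le h le_rfl)

lemma cvMinorant_le {c : EReal}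
    (h : ∀ p q : ℝ, (∀ x, ((p * x + q : ℝ) : EReal) ≤ min (f x) (g x)) →
      ((p * a + q : ℝ) : EReal) ≤ c) :
    cvMinorant f g a ≤ c :=
  iSup₂_le fun p q => iSup_le (h p q)

end Sweep

section Speed

variable {μν μη : Measure ℝ}

noncomputable abbrev anomalousRate (μν μη : Measure ℝ) : ℝ → EReal :=
  cvMinorant (sweep (kappaStar μν)) (kappaStar μη)

noncomputable def infMaxSpeed (μν μη : Measure ℝ) : EReal :=
  ⨅ (φ : ℝ) (θ : ℝ) (_ : 0 < φ) (_ : φ ≤ θ),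
    max (kappa μν φ / (φ : EReal)) (kappa μη θ / (θ : EReal))

lemma kappa_div_le_iff {μ : Measure ℝ} {φ M : ℝ} (hφ : 0 < φ) :
    kappa μ φ / (φ : EReal) ≤ M ↔ kappa μ φ ≤ ((φ * M : ℝ) : EReal) := by
  rw [EReal.coe_mul, EReal.div_le_iff_le_mul (by exact_mod_cast hφ) (EReal.coe_ne_top _)]

lemma le_max_kappa_div_of_anomalousRate_neg {a φ θ : ℝ} (ha : anomalousRate μν μη a < 0)
    (hφ : 0 < φ) (hφθ : φ ≤ θ) :
    (a : EReal) ≤ max (kappa μν φ / (φ : EReal)) (kappa μη θ / (θ : EReal)) := by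
  by_contra! hlt
  obtain ⟨M, hM, hMa⟩ := EReal.exists_between_coe_real hlt
  have hθ : 0 < θ := hφ.trans_le hφθ
  have hν := (kappa_div_le_iff hφ).1 ((le_max_left _ _).trans hM.le)
  have hη := (kappa_div_le_iff hθ).1 ((le_max_right _ _).trans hM.le)
  -- The line of slope `θ` through `(M, 0)` lies below `(κ*_ν)°` because `κ*_ν ≤ 0` forces `x ≤ M`.
  have hline : ∀ x, ((θ * x + -(θ * M) : ℝ) : EReal) ≤
      min (sweep (kappaStar μν) x) (kappaStar μη x) := by
    intro x
    refine le_min ?_ (by simpa [sub_eq_add_neg] using coe_sub_le_kappaStar hη x)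
    unfold sweep
    split_ifs with hx
    · have hνx := coe_sub_le_kappaStar hν x
      have hxM : x ≤ M := by
        have : φ * x - φ * M ≤ 0 := by exact_mod_cast hνx.trans hx
        nlinarith
      exact le_trans (by exact_mod_cast (by nlinarith : θ * x + -(θ * M) ≤ φ * x - φ * M)) hνx
    · exact le_top
  have hpos : θ * a + -(θ * M) < 0 := by exact_mod_cast (coe_le_cvMinorant hline a).trans_lt ha
  have : M < a := by exact_mod_cast hMa
  nlinarith

lemma affine_nonpos_of_lt_infMaxSpeed [IsFiniteMeasure μν] [IsFiniteMeasure μη]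
    (hν : 1 < μν univ) (hη : μη ≠ 0) {p q a₀ b : ℝ}
    (hline : ∀ x, ((p * x + q : ℝ) : EReal) ≤ min (sweep (kappaStar μν) x) (kappaStar μη x))
    (ha₀ : p * a₀ + q < 0) (ha₀b : a₀ ≤ b) (hb : (b : EReal) < infMaxSpeed μν μη) :
    p * b + q ≤ 0 := by
  by_contra! hpos
  rcases le_or_gt p 0 with hp | hp
  · nlinarith [mul_le_mul_of_nonpos_left ha₀b hp]
  have hηp : kappa μη p ≤ ((-q : ℝ) : EReal) :=
    kappa_le_of_affine_le_kappaStar hη hp fun x => (hline x).trans (min_le_right _ _)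
  obtain ⟨φ, hφ, hφp, hφb⟩ := exists_kappa_le_mul_of_affine_le_kappaStar hν hp
    (fun x hx => sweep_of_nonpos (f := kappaStar μν) hx ▸ (hline x).trans (min_le_left _ _)) hpos
  refine hb.not_ge (iInf₂_le_of_le φ p (iInf₂_le_of_le hφ hφp (max_le ?_ ?_)))
  · exact (kappa_div_le_iff hφ).2 hφb
  · exact (kappa_div_le_iff hp).2 (hηp.trans (by exact_mod_cast (by linarith : -q ≤ p * b)))

lemma anomalousRate_neg_of_lt_infMaxSpeed [IsFiniteMeasure μν] [IsFiniteMeasure μη]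
    (hν : 1 < μν univ) (hη : μη ≠ 0) {b : ℝ} (hb : (b : EReal) < infMaxSpeed μν μη) :
    anomalousRate μν μη b < 0 := by
  obtain ⟨b', hbb', hb'⟩ := EReal.exists_between_coe_real hb
  obtain ⟨a₀, ha₀b, ha₀⟩ := exists_kappaStar_neg hν b
  obtain ⟨c, ha₀c, hc⟩ := EReal.exists_between_coe_real ha₀
  have hbb' : b < b' := by exact_mod_cast hbb'
  have hc : c < 0 := by exact_mod_cast hc
  -- Every affine minorant is `≤ c` at `a₀` and `≤ 0` at `b'`; interpolate at `b`.
  refine (cvMinorant_le (c := (((b' - b) * c / (b' - a₀) : ℝ) : EReal))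
    fun p q hline => ?_).trans_lt ?_
  · have h₀ : p * a₀ + q ≤ c := by
      have := (hline a₀).trans (min_le_left _ _)
      rw [sweep_of_nonpos ha₀.le] at this
      exact_mod_cast this.trans ha₀c.le
    have h₁ := affine_nonpos_of_lt_infMaxSpeed hν hη hline (h₀.trans_lt hc) (by linarith) hb'
    rw [EReal.coe_le_coe_iff, le_div_iff₀ (by linarith)]
    nlinarith
  · exact_mod_cast div_neg_of_neg_of_pos (mul_neg_of_pos_of_neg (by linarith) hc) (by linarith)

end Speed

theorem anomalous_speed_formulae_agree_general (μν μη : Measure ℝ)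
    [IsFiniteMeasure μν] [IsFiniteMeasure μη]
    (hν : 1 < μν Set.univ) (hη : 0 < μη Set.univ) :
    (⨆ a ∈ {a : ℝ |
        sweep (cvMinorant (sweep (kappaStar μν)) (kappaStar μη)) a < 0}, (a : EReal)) =
      ⨅ (φ : ℝ) (θ : ℝ) (_ : 0 < φ) (_ : φ ≤ θ),
        max (kappa μν φ / (φ : EReal)) (kappa μη θ / (θ : EReal)) := by
  change _ = infMaxSpeed μν μη
  refine le_antisymm (iSup₂_le fun a ha => le_iInf₂ fun φ θ => le_iInf₂ fun hφ hφθ =>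
    le_max_kappa_div_of_anomalousRate_neg (sweep_lt_zero_iff.1 ha) hφ hφθ) ?_
  refine EReal.le_of_forall_lt_iff_le.1 fun b hb => ?_
  by_contra! hbs
  have hrate := anomalousRate_neg_of_lt_infMaxSpeed hν (Measure.measure_univ_pos.1 hη) hbs
  exact hb.not_ge (le_iSup₂_of_le b (sweep_lt_zero_iff.2 hrate) le_rfl)

/-- The two formulae for the anomalous spreading speed agree: with
`r = (cv((κ*_ν)°, κ*_η))°`,
`sup {a : r(a) < 0} = inf {max (κ_ν(φ)/φ) (κ_η(θ)/θ) : 0 < φ ≤ θ}`. -/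
theorem anomalous_speed_formulae_agree (μν μη : Measure ℝ)
    [IsFiniteMeasure μν] [IsFiniteMeasure μη]
    (hν : 1 < μν Set.univ) (hη : 0 < μη Set.univ)
    (hφ : ∃ φν φη : ℝ, 0 < φν ∧ φν ≤ φη ∧ kappa μν φν < ⊤ ∧ kappa μη φη < ⊤) :
    (⨆ a ∈ {a : ℝ |
        sweep (cvMinorant (sweep (kappaStar μν)) (kappaStar μη)) a < 0}, (a : EReal)) =
      ⨅ (φ : ℝ) (θ : ℝ) (_ : 0 < φ) (_ : φ ≤ θ),
        max (kappa μν φ / (φ : EReal)) (kappa μη θ / (θ : EReal)) :=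
  anomalous_speed_formulae_agree_general μν μη hν hη
end

section
/- Expected numbers of the second type in the reducible two-type branching random walk grow at rate governed by the convex minorant of the two duals: with ν_n = Σ_{m=0}^{n−1} μ_ν^{*m} ⋆ μ_c ⋆ μ_η^{*(n−1−m)} (where ⋆ is convolution of measures and μ^{*0} is the Dirac mass at 0), for every a ∈ ℝ, limsup_{n→∞} (1/n) log ν_n([na, ∞)) ≤ −cv(κ*_ν, κ*_η)(a), in the extended reals (with log 0 = −∞). -/
/-!
Chernoff's bound at a parameter `θ ≥ 0`, together with the multiplicativity of the Laplace
transform `L(θ) = ∫ e^{θ z}` under convolution, gives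
`ν_n([n a, ∞)) ≤ n e^{-θ n a} L_c(θ) max (L_ν(θ), L_η(θ))^{n-1}`, hence a limsup of at most
`max (κ_ν(θ), κ_η(θ)) - θ a`. If `p x + q ≤ min (κ*_ν, κ*_η)`, then `p ≥ 0` and
`κ_ν(p), κ_η(p) ≤ -q` (the easy half of Fenchel–Moreau duality, obtained by exponential
tilting), so `θ = p` bounds the limsup by `-(p a + q)`; the supremum of these affine minorants
is `cv(κ*_ν, κ*_η)(a)`.
-/

open MeasureTheory Filter Topology

/-- The `n`-fold convolution power of a measure on `ℝ` (`μ^{*0}` is the Dirac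
mass at `0`, and `μ^{*1} = μ`). -/
noncomputable def convPow (μ : Measure ℝ) : ℕ → Measure ℝ
  | 0 => Measure.dirac 0
  | n + 1 => Measure.conv (convPow μ n) μ

/-- Intensity measure of the `n`-th generation type-`η` particles in the
reducible two-type branching random walk started from one type-`ν` particle:
`ν_n = Σ_{m=0}^{n−1} μ_ν^{*m} ⋆ μ_c ⋆ μ_η^{*(n−1−m)}`. -/
noncomputable def etaIntensity (μν μc μη : Measure ℝ) (n : ℕ) : Measure ℝ :=
  ∑ m ∈ Finset.range n,
    Measure.conv (Measure.conv (convPow μν m) μc) (convPow μη (n - 1 - m))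

noncomputable def laplace (μ : Measure ℝ) (θ : ℝ) : ENNReal :=
  ∫⁻ z, ENNReal.ofReal (Real.exp (θ * z)) ∂μ

lemma kappa_of_nonneg_s16 (μ : Measure ℝ) {θ : ℝ} (hθ : 0 ≤ θ) : kappa μ θ = (laplace μ θ).log :=
  if_pos hθ

lemma kappaStar_le_of_forall_le_laplace (μ : Measure ℝ) (x s : ℝ)
    (h : ∀ θ, 0 ≤ θ → ENNReal.ofReal (Real.exp (θ * x - s)) ≤ laplace μ θ) :
    kappaStar μ x ≤ s := by
  refine iSup_le fun θ => ?_
  rcases lt_or_ge θ 0 with hθ | hθ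
  · simp [kappa, hθ.not_ge]
  calc ((θ * x : ℝ) : EReal) - kappa μ θ
      ≤ ((θ * x : ℝ) : EReal) - (ENNReal.ofReal (Real.exp (θ * x - s))).log := by
        rw [kappa_of_nonneg_s16 μ hθ]
        exact EReal.sub_le_sub le_rfl (ENNReal.log_le_log (h θ hθ))
    _ = s := by
        rw [ENNReal.log_ofReal_of_pos (Real.exp_pos _), Real.log_exp, ← EReal.coe_sub]
        congr 1
        ring

lemma kappaStar_anti {μ ν : Measure ℝ} (h : μ ≤ ν) (x : ℝ) : kappaStar ν x ≤ kappaStar μ x := by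
  refine iSup_mono fun θ => EReal.sub_le_sub le_rfl ?_
  rcases lt_or_ge θ 0 with hθ | hθ
  · simp [kappa, hθ.not_ge]
  rw [kappa_of_nonneg_s16 μ hθ, kappa_of_nonneg_s16 ν hθ]
  exact ENNReal.log_le_log (lintegral_mono' h le_rfl)

lemma ofReal_integral_le_lintegral_ofReal {α : Type*} [MeasurableSpace α] (μ : Measure α)
    (f : α → ℝ) : ENNReal.ofReal (∫ x, f x ∂μ) ≤ ∫⁻ x, ENNReal.ofReal (f x) ∂μ := by
  by_cases hf : Integrable f μ
  · rw [integral_eq_lintegral_pos_part_sub_lintegral_neg_part hf]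
    refine (ENNReal.ofReal_le_ofReal (sub_le_self _ ENNReal.toReal_nonneg)).trans ?_
    exact ENNReal.ofReal_toReal_le
  · simp [integral_undef hf]

/-- Exponential tilting: if `d` is the mean of `e^{p z} μ(dz)`, then `κ(θ) ≥ κ(p) + (θ - p) d`
for all `θ`, because `e^{θ z} ≥ e^{p z} e^{(θ - p) d} (1 + (θ - p)(z - d))`. -/
lemma kappaStar_tiltedMean_le (μ : Measure ℝ) (p d : ℝ)
    (hI : Integrable (fun z => Real.exp (p * z)) μ)
    (hD : Integrable (fun z => z * Real.exp (p * z)) μ)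
    (hd : ∫ z, z * Real.exp (p * z) ∂μ = d * ∫ z, Real.exp (p * z) ∂μ)
    (hIpos : 0 < ∫ z, Real.exp (p * z) ∂μ) :
    kappaStar μ d ≤ ((p * d - Real.log (∫ z, Real.exp (p * z) ∂μ) : ℝ) : EReal) := by
  set I := ∫ z, Real.exp (p * z) ∂μ
  refine kappaStar_le_of_forall_le_laplace μ d _ fun θ _ => ?_
  set u := θ - p
  have hpt : ∀ z, Real.exp (u * d) * (Real.exp (p * z) + u * (z * Real.exp (p * z))
      - u * d * Real.exp (p * z)) ≤ Real.exp (θ * z) := by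
    intro z
    have h := Real.add_one_le_exp (u * (z - d))
    calc _ = Real.exp (u * d) * Real.exp (p * z) * (u * (z - d) + 1) := by ring
      _ ≤ Real.exp (u * d) * Real.exp (p * z) * Real.exp (u * (z - d)) := by gcongr
      _ = Real.exp (θ * z) := by
          rw [← Real.exp_add, ← Real.exp_add]
          congr 1
          ring
  have hint : ∫ z, Real.exp (u * d) * (Real.exp (p * z) + u * (z * Real.exp (p * z))
      - u * d * Real.exp (p * z)) ∂μ = Real.exp (u * d) * I := by
    have hsum : Integrable (fun z => Real.exp (p * z) + u * (z * Real.exp (p * z))) μ :=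
      hI.add (hD.const_mul u)
    rw [integral_const_mul, integral_sub hsum (hI.const_mul _),
      integral_add hI (hD.const_mul u), integral_const_mul, integral_const_mul, hd]
    ring
  calc ENNReal.ofReal (Real.exp (θ * d - (p * d - Real.log I)))
      = ENNReal.ofReal (Real.exp (u * d) * I) := by
        rw [show θ * d - (p * d - Real.log I) = u * d + Real.log I by ring, Real.exp_add,
          Real.exp_log hIpos]
    _ ≤ laplace μ θ := by
        rw [← hint]
        exact (ofReal_integral_le_lintegral_ofReal μ _).trans
          (lintegral_mono fun z => ENNReal.ofReal_le_ofReal (hpt z))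

lemma laplace_le_of_integrable_of_affine_le_kappaStar (μ : Measure ℝ) (p q : ℝ)
    (hI : Integrable (fun z => Real.exp (p * z)) μ)
    (hD : Integrable (fun z => z * Real.exp (p * z)) μ)
    (hpq : ∀ x, ((p * x + q : ℝ) : EReal) ≤ kappaStar μ x) :
    laplace μ p ≤ ENNReal.ofReal (Real.exp (-q)) := by
  set I := ∫ z, Real.exp (p * z) ∂μ
  rw [laplace, ← ofReal_integral_eq_lintegral_ofReal hI
    (ae_of_all _ fun z => (Real.exp_pos _).le)]
  rcases le_or_gt I 0 with hI0 | hIpos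
  · rw [ENNReal.ofReal_eq_zero.2 hI0]
    exact zero_le
  set d := (∫ z, z * Real.exp (p * z) ∂μ) / I
  have hsupport := (hpq d).trans
    (kappaStar_tiltedMean_le μ p d hI hD (div_mul_cancel₀ _ hIpos.ne').symm hIpos)
  have hlog : Real.log I ≤ -q := by
    have := EReal.coe_le_coe_iff.1 hsupport
    linarith
  exact ENNReal.ofReal_le_ofReal ((Real.log_le_iff_le_exp hIpos).1 hlog)

/-- Truncation to `[-R, R]` makes the tilted mean exist and only increases `κ*`; monotone
convergence then recovers the Laplace transform of `μ` itself. -/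
lemma laplace_le_of_affine_le_kappaStar (μ : Measure ℝ) [IsLocallyFiniteMeasure μ] (p q : ℝ)
    (hpq : ∀ x, ((p * x + q : ℝ) : EReal) ≤ kappaStar μ x) :
    laplace μ p ≤ ENNReal.ofReal (Real.exp (-q)) := by
  set K : ℕ → Set ℝ := fun R => Set.Icc (-R) R
  have hK : Monotone K := fun R S h => Set.Icc_subset_Icc (by simpa using h) (by simpa using h)
  have hunion : ⋃ R, K R = Set.univ := by
    refine Set.eq_univ_of_forall fun z => Set.mem_iUnion.2 ?_
    obtain ⟨R, hR⟩ := exists_nat_ge |z|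
    exact ⟨R, abs_le.1 hR⟩
  calc laplace μ p = ⨆ R, laplace (μ.restrict (K R)) p := by
        simp only [laplace]
        rw [← setLIntegral_iUnion_of_directed _ hK.directed_le, hunion, Measure.restrict_univ]
    _ ≤ _ := iSup_le fun R => laplace_le_of_integrable_of_affine_le_kappaStar _ p q
        (by fun_prop : Continuous fun z => Real.exp (p * z)).integrableOn_Icc
        (by fun_prop : Continuous fun z => z * Real.exp (p * z)).integrableOn_Icc
        fun x => (hpq x).trans (kappaStar_anti Measure.restrict_le_self x)

lemma ofReal_exp_mul_measure_Ici_le_laplace (ρ : Measure ℝ) {θ : ℝ} (hθ : 0 ≤ θ) (t : ℝ) :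
    ENNReal.ofReal (Real.exp (θ * t)) * ρ (Set.Ici t) ≤ laplace ρ θ := by
  rw [← setLIntegral_const]
  refine (setLIntegral_mono (by fun_prop) fun z hz => ?_).trans (setLIntegral_le_lintegral _ _)
  exact ENNReal.ofReal_le_ofReal (Real.exp_le_exp.2 (mul_le_mul_of_nonneg_left hz hθ))

lemma exists_measure_Ici_ne_zero {μ : Measure ℝ} (hμ : μ ≠ 0) : ∃ c, μ (Set.Ici c) ≠ 0 := by
  by_contra! h
  have hunion : ⋃ n : ℕ, Set.Ici (-(n : ℝ)) = Set.univ := by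
    refine Set.eq_univ_of_forall fun z => Set.mem_iUnion.2 ?_
    obtain ⟨n, hn⟩ := exists_nat_ge (-z)
    exact ⟨n, neg_le.1 hn⟩
  exact hμ (Measure.measure_univ_eq_zero.1 (hunion ▸ measure_iUnion_null fun n => h _))

lemma kappaStar_le_neg_log_measure_Ici (μ : Measure ℝ) [IsFiniteMeasure μ] {c x : ℝ}
    (hx : x ≤ c) (hc : μ (Set.Ici c) ≠ 0) :
    kappaStar μ x ≤ ((-Real.log (μ (Set.Ici c)).toReal : ℝ) : EReal) := by
  have hm : 0 < (μ (Set.Ici c)).toReal := ENNReal.toReal_pos hc (measure_ne_top μ _)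
  refine kappaStar_le_of_forall_le_laplace μ x _ fun θ hθ => ?_
  calc ENNReal.ofReal (Real.exp (θ * x - -Real.log (μ (Set.Ici c)).toReal))
      = ENNReal.ofReal (Real.exp (θ * x)) * μ (Set.Ici c) := by
        rw [sub_neg_eq_add, Real.exp_add, Real.exp_log hm,
          ENNReal.ofReal_mul (Real.exp_pos _).le, ENNReal.ofReal_toReal (measure_ne_top μ _)]
    _ ≤ ENNReal.ofReal (Real.exp (θ * c)) * μ (Set.Ici c) := by gcongr
    _ ≤ laplace μ θ := ofReal_exp_mul_measure_Ici_le_laplace μ hθ c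

/-- `κ*` stays bounded as `x → -∞`, so an affine minorant of `κ*` cannot have negative slope. -/
lemma nonneg_of_affine_le_kappaStar {μ : Measure ℝ} [IsFiniteMeasure μ] (hμ : μ ≠ 0) {p q : ℝ}
    (hpq : ∀ x, ((p * x + q : ℝ) : EReal) ≤ kappaStar μ x) : 0 ≤ p := by
  obtain ⟨c, hc⟩ := exists_measure_Ici_ne_zero hμ
  set C := -Real.log (μ (Set.Ici c)).toReal
  by_contra! hp
  set x := min c ((C - q + 1) / p)
  have hle := EReal.coe_le_coe_iff.1
    ((hpq x).trans (kappaStar_le_neg_log_measure_Ici μ (min_le_left _ _) hc))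
  have hgt : C - q + 1 ≤ p * x := by
    calc C - q + 1 = p * ((C - q + 1) / p) := (mul_div_cancel₀ _ hp.ne).symm
      _ ≤ p * x := mul_le_mul_of_nonpos_left (min_le_right _ _) hp.le
  linarith

lemma measure_Ici_le_laplace (ρ : Measure ℝ) {θ : ℝ} (hθ : 0 ≤ θ) (t : ℝ) :
    ρ (Set.Ici t) ≤ ENNReal.ofReal (Real.exp (-(θ * t))) * laplace ρ θ := by
  calc ρ (Set.Ici t)
      = ENNReal.ofReal (Real.exp (-(θ * t))) *
          (ENNReal.ofReal (Real.exp (θ * t)) * ρ (Set.Ici t)) := by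
        rw [← mul_assoc, ← ENNReal.ofReal_mul (Real.exp_pos _).le, ← Real.exp_add,
          neg_add_cancel, Real.exp_zero, ENNReal.ofReal_one, one_mul]
    _ ≤ _ := by gcongr; exact ofReal_exp_mul_measure_Ici_le_laplace ρ hθ t

lemma laplace_conv (μ ν : Measure ℝ) [SFinite μ] [SFinite ν] (θ : ℝ) :
    laplace (μ.conv ν) θ = laplace μ θ * laplace ν θ := by
  rw [laplace, Measure.conv, lintegral_map (by fun_prop) (by fun_prop),
    lintegral_prod _ (by fun_prop), laplace, laplace, ← lintegral_mul_const _ (by fun_prop)]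
  refine lintegral_congr fun x => ?_
  simp only [mul_add, Real.exp_add, ENNReal.ofReal_mul (Real.exp_pos _).le]
  exact lintegral_const_mul _ (by fun_prop)

instance sFinite_convPow (μ : Measure ℝ) [SFinite μ] (n : ℕ) : SFinite (convPow μ n) := by
  induction n with
  | zero => exact inferInstanceAs (SFinite (Measure.dirac 0))
  | succ n ih => exact inferInstanceAs (SFinite (Measure.conv _ _))

lemma laplace_convPow (μ : Measure ℝ) [SFinite μ] (θ : ℝ) (n : ℕ) :
    laplace (convPow μ n) θ = laplace μ θ ^ n := by
  induction n with
  | zero => simp [convPow, laplace]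
  | succ n ih => rw [convPow, laplace_conv, ih, pow_succ]

lemma etaIntensity_Ici_le (μν μη μc : Measure ℝ) [SFinite μν] [SFinite μη] [SFinite μc]
    {θ : ℝ} (hθ : 0 ≤ θ) {B C : ENNReal} (hν : laplace μν θ ≤ B) (hη : laplace μη θ ≤ B)
    (hc : laplace μc θ ≤ C) (n : ℕ) (t : ℝ) :
    etaIntensity μν μc μη n (Set.Ici t) ≤
      n * (ENNReal.ofReal (Real.exp (-(θ * t))) * (C * B ^ (n - 1))) := by
  rw [etaIntensity, Measure.coe_finsetSum, Finset.sum_apply]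
  refine (Finset.sum_le_card_nsmul _ _ _ fun m hm => ?_).trans_eq
    (by rw [Finset.card_range, nsmul_eq_mul])
  refine (measure_Ici_le_laplace _ hθ t).trans ?_
  rw [laplace_conv, laplace_conv, laplace_convPow, laplace_convPow]
  calc _ ≤ ENNReal.ofReal (Real.exp (-(θ * t))) * (B ^ m * C * B ^ (n - 1 - m)) := by gcongr
    _ = _ := by
        rw [mul_right_comm, ← pow_add, Nat.add_sub_cancel' (by grind), mul_comm C]

lemma limsup_inv_mul_log_le (x : ℕ → ENNReal) (k c : ℝ)
    (h : ∀ᶠ n in atTop, x n ≤ ENNReal.ofReal (n * Real.exp (k + n * c))) :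
    limsup (fun n : ℕ => (((n : ℝ)⁻¹ : ℝ) : EReal) * (x n).log) atTop ≤ c := by
  set r : ℕ → ℝ := fun n => Real.log n / n + k / n + c
  have hr : Tendsto r atTop (𝓝 c) := by
    have hlog : Tendsto (fun y : ℝ => Real.log y / y) atTop (𝓝 0) := by
      simpa using Real.tendsto_pow_log_div_mul_add_atTop 1 0 1 one_ne_zero
    have hk : Tendsto (fun y : ℝ => k / y) atTop (𝓝 0) := tendsto_const_nhds.div_atTop tendsto_id
    simpa using ((hlog.add hk).comp tendsto_natCast_atTop_atTop).add_const c
  have hle : ∀ᶠ n : ℕ in atTop, (((n : ℝ)⁻¹ : ℝ) : EReal) * (x n).log ≤ r n := by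
    filter_upwards [h, eventually_gt_atTop 0] with n hn hpos
    have hn0 : (0 : ℝ) < n := Nat.cast_pos.2 hpos
    have hlog : (x n).log ≤ ((Real.log n + (k + n * c) : ℝ) : EReal) := by
      refine (ENNReal.log_le_log hn).trans_eq ?_
      rw [ENNReal.log_ofReal_of_pos (by positivity), Real.log_mul hn0.ne' (Real.exp_pos _).ne',
        Real.log_exp]
    refine (mul_le_mul_of_nonneg_left hlog (by exact_mod_cast (inv_pos.2 hn0).le)).trans_eq ?_
    rw [← EReal.coe_mul]
    congr 1
    simp only [r]
    field_simp
    ring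
  calc _ ≤ limsup (fun n => (r n : EReal)) atTop := limsup_le_limsup hle
    _ = c := ((continuous_coe_real_ereal.tendsto c).comp hr).limsup_eq

lemma limsup_etaIntensity_le (μν μη μc : Measure ℝ) [SFinite μν] [SFinite μη] [SFinite μc]
    {θ b γ : ℝ} (hθ : 0 ≤ θ) (hν : laplace μν θ ≤ ENNReal.ofReal (Real.exp b))
    (hη : laplace μη θ ≤ ENNReal.ofReal (Real.exp b))
    (hc : laplace μc θ ≤ ENNReal.ofReal (Real.exp γ)) (a : ℝ) :
    limsup (fun n : ℕ => (((n : ℝ)⁻¹ : ℝ) : EReal) *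
        (etaIntensity μν μc μη n (Set.Ici ((n : ℝ) * a))).log) atTop ≤
      ((b - θ * a : ℝ) : EReal) := by
  refine limsup_inv_mul_log_le _ (γ - b) (b - θ * a) ?_
  filter_upwards [eventually_ge_atTop 1] with n hn
  refine (etaIntensity_Ici_le μν μη μc hθ hν hη hc n (n * a)).trans_eq ?_
  rw [← ENNReal.ofReal_pow (Real.exp_pos _).le, ← ENNReal.ofReal_mul (Real.exp_pos _).le,
    ← ENNReal.ofReal_mul (Real.exp_pos _).le, ← ENNReal.ofReal_natCast,
    ← ENNReal.ofReal_mul n.cast_nonneg, ← Real.exp_nat_mul, ← Real.exp_add, ← Real.exp_add,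
    Nat.cast_sub hn, Nat.cast_one]
  congr 3
  ring

theorem eta_expected_numbers_upper_bound_general (μν μη μc : Measure ℝ)
    [IsFiniteMeasure μν] [IsFiniteMeasure μη] [IsFiniteMeasure μc]
    (hη : 0 < μη Set.univ)
    (hcexp : ∀ θ : ℝ, 0 ≤ θ → ∫⁻ z, ENNReal.ofReal (Real.exp (θ * z)) ∂μc < ⊤) :
    ∀ a : ℝ,
      limsup (fun n : ℕ =>
          ((((n : ℝ)⁻¹ : ℝ) : EReal)) *
            ((etaIntensity μν μc μη n (Set.Ici ((n : ℝ) * a))).log))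
        atTop ≤ -(cvMinorant (kappaStar μν) (kappaStar μη) a) := by
  intro a
  refine EReal.le_neg_of_le_neg (iSup₂_le fun p q => iSup_le fun hpq => ?_)
  have hpqν x := (hpq x).trans (min_le_left _ _)
  have hpqη x := (hpq x).trans (min_le_right _ _)
  have hp : 0 ≤ p := nonneg_of_affine_le_kappaStar (Measure.measure_univ_pos.1 hη) hpqη
  have hν := laplace_le_of_affine_le_kappaStar μν p q hpqν
  have hη := laplace_le_of_affine_le_kappaStar μη p q hpqη
  have hc : laplace μc p ≤ ENNReal.ofReal (Real.exp (laplace μc p).toReal) :=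
    (ENNReal.ofReal_toReal (hcexp p hp).ne).symm.trans_le
      (ENNReal.ofReal_le_ofReal ((lt_add_one _).le.trans (Real.add_one_le_exp _)))
  refine EReal.le_neg_of_le_neg ((limsup_etaIntensity_le μν μη μc hp hν hη hc a).trans_eq ?_)
  rw [← EReal.coe_neg]
  ring_nf

/-- Expected numbers of the second type grow at rate governed by the convex
minorant of the two duals:
`limsup_n (1/n) log ν_n([n a, ∞)) ≤ −cv(κ*_ν, κ*_η)(a)`. -/
theorem eta_expected_numbers_upper_bound (μν μη μc : Measure ℝ)
    [IsFiniteMeasure μν] [IsFiniteMeasure μη] [IsFiniteMeasure μc]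
    (hν : 1 < μν Set.univ) (hη : 0 < μη Set.univ) (hc : μc ≠ 0)
    (hcexp : ∀ θ : ℝ, 0 ≤ θ → ∫⁻ z, ENNReal.ofReal (Real.exp (θ * z)) ∂μc < ⊤)
    (hφ : ∃ φν φη : ℝ, 0 < φν ∧ φν ≤ φη ∧ kappa μν φν < ⊤ ∧ kappa μη φη < ⊤) :
    ∀ a : ℝ,
      limsup (fun n : ℕ =>
          ((((n : ℝ)⁻¹ : ℝ) : EReal)) *
            ((etaIntensity μν μc μη n (Set.Ici ((n : ℝ) * a))).log))
        atTop ≤ -(cvMinorant (kappaStar μν) (kappaStar μη) a) :=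
  eta_expected_numbers_upper_bound_general μν μη μc hη hcexp
end
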